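/- Let m be an order function on ℝ^n. Then there exist a constant C > 0 and an exponent ν ≥ 0, depending only on n and m, such that for every subset Ω ⊆ ℝ^n and all real numbers a < b one has ∫_{∂Ω^{[a,b]}} m(x) dx ≤ C (1 + max(|a|, |b|))^ν ∫_{∂Ω^{[−1,1]}} m(x) dx. -/
import Mathlib


open MeasureTheory Metric Set
open scoped ENNReal

noncomputable section

/-- An order function on a normed space: positive, with polynomially controlled variation. -/
def IsOrderFunction {E : Type*} [NormedAddCommGroup E] (m : E → ℝ) : Prop :=
  (∀ x, 0 < m x) ∧ ∃ C ν : ℝ, 0 < C ∧ 0 ≤ ν ∧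
    ∀ x y, m x ≤ C * (1 + ‖x - y‖) ^ ν * m y

/-- `∂Ω^{[a,b]}` for `0 ≤ a ≤ b`: points of `closure Ωᶜ` at distance in `[a,b]` from `Ω`. -/
def outerThick {n : ℕ} (Ω : Set (EuclideanSpace ℝ (Fin n))) (a b : ℝ) :
    Set (EuclideanSpace ℝ (Fin n)) :=
  {x | x ∈ closure Ωᶜ ∧ a ≤ infDist x Ω ∧ infDist x Ω ≤ b}

/-- `∂Ω^{[-b,-a]}` for `0 ≤ a ≤ b`: points of `closure Ω` at distance in `[a,b]` from `Ωᶜ`. -/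
def innerThick {n : ℕ} (Ω : Set (EuclideanSpace ℝ (Fin n))) (a b : ℝ) :
    Set (EuclideanSpace ℝ (Fin n)) :=
  {x | x ∈ closure Ω ∧ a ≤ infDist x Ωᶜ ∧ infDist x Ωᶜ ≤ b}

/-- `∂Ω^{[a,b]}` for arbitrary real `a ≤ b`. -/
def genThick {n : ℕ} (Ω : Set (EuclideanSpace ℝ (Fin n))) (a b : ℝ) :
    Set (EuclideanSpace ℝ (Fin n)) :=
  if 0 ≤ a then outerThick Ω a b
  else if b ≤ 0 then innerThick Ω (-b) (-a)
  else innerThick Ω 0 (-a) ∪ outerThick Ω 0 b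

/-- `∂Ω^{[-1,1]}`, the unit thickening of the boundary of `Ω`. -/
def unitThick {n : ℕ} (Ω : Set (EuclideanSpace ℝ (Fin n))) :
    Set (EuclideanSpace ℝ (Fin n)) :=
  innerThick Ω 0 1 ∪ outerThick Ω 0 1

namespace OrderAux

variable {n : ℕ}

lemma innerThick_eq_outerThick_compl (Ω : Set (EuclideanSpace ℝ (Fin n))) (a b : ℝ) :
    innerThick Ω a b = outerThick Ωᶜ a b := by
  simp [innerThick, outerThick, compl_compl]

lemma unitThick_compl (Ω : Set (EuclideanSpace ℝ (Fin n))) :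
    unitThick Ωᶜ = unitThick Ω := by
  unfold unitThick
  rw [innerThick_eq_outerThick_compl, innerThick_eq_outerThick_compl, compl_compl, union_comm]

lemma mem_unitThick {Ω : Set (EuclideanSpace ℝ (Fin n))} {w : EuclideanSpace ℝ (Fin n)}
    (h1 : infDist w Ω ≤ 1) (h2 : infDist w Ωᶜ ≤ 1) : w ∈ unitThick Ω := by
  by_cases hw : w ∈ closure Ω
  · exact Or.inl ⟨hw, infDist_nonneg, h2⟩
  · refine Or.inr ⟨subset_closure (fun hmem => hw (subset_closure hmem)), infDist_nonneg, h1⟩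

lemma outer_ball (Ω : Set (EuclideanSpace ℝ (Fin n))) (x : EuclideanSpace ℝ (Fin n)) (R : ℝ)
    (hx : x ∈ closure Ωᶜ) (hd : infDist x Ω ≤ R) :
    ∃ z : EuclideanSpace ℝ (Fin n), dist z x ≤ R + 1 ∧ ball z (4⁻¹ : ℝ) ⊆ unitThick Ω := by
  have hd0 : (0:ℝ) ≤ infDist x Ω := infDist_nonneg
  by_cases hsmall : infDist x Ω ≤ 2⁻¹
  · refine ⟨x, by simp; linarith, ?_⟩
    intro w hw
    rw [mem_ball] at hw
    have hxc : infDist x Ωᶜ = 0 := by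
      have hne : Ωᶜ.Nonempty := by
        rcases eq_empty_or_nonempty Ωᶜ with h | h
        · rw [h, closure_empty] at hx; exact absurd hx (notMem_empty x)
        · exact h
      exact (mem_closure_iff_infDist_zero hne).mp hx
    apply mem_unitThick
    · have := infDist_le_infDist_add_dist (x := w) (y := x) (s := Ω)
      linarith
    · have := infDist_le_infDist_add_dist (x := w) (y := x) (s := Ωᶜ)
      linarith
  · push_neg at hsmall
    have hΩ : Ω.Nonempty := by
      rcases eq_empty_or_nonempty Ω with h | h
      · rw [h] at hsmall; simp [infDist_empty] at hsmall; linarith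
      · exact h
    obtain ⟨y, hyΩ, hxy⟩ := (infDist_lt_iff hΩ).mp
      (show infDist x Ω < infDist x Ω + 2⁻¹ by linarith)
    set φ : ℝ → ℝ := fun t => infDist (x + t • (y - x)) Ω with hφ
    have hcont : Continuous φ := by
      apply (continuous_infDist_pt Ω).comp
      continuity
    have h0 : φ 0 = infDist x Ω := by simp [hφ]
    have h1 : φ 1 = 0 := by
      simp only [hφ, one_smul]
      have : x + (y - x) = y := by abel
      rw [this]
      exact infDist_zero_of_mem hyΩ
    obtain ⟨t, ht01, htv⟩ : ∃ t ∈ Icc (0:ℝ) 1, φ t = 2⁻¹ := by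
      have hIV := intermediate_value_Icc' (by norm_num : (0:ℝ) ≤ 1) hcont.continuousOn
      have hmem : (2⁻¹:ℝ) ∈ Icc (φ 1) (φ 0) := by
        rw [h0, h1]; constructor <;> [norm_num; linarith]
      obtain ⟨t, ht, htv⟩ := hIV hmem
      exact ⟨t, ht, htv⟩
    refine ⟨x + t • (y - x), ?_, ?_⟩
    · have heq : dist (x + t • (y - x)) x = |t| * ‖y - x‖ := by
        rw [dist_eq_norm]
        simp [norm_smul, abs_of_nonneg ht01.1]
      rw [heq, abs_of_nonneg ht01.1]
      have h1' : t * ‖y - x‖ ≤ ‖y - x‖ := by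
        have := norm_nonneg (y - x)
        nlinarith [ht01.2]
      have h2 : ‖y - x‖ = dist x y := by rw [dist_eq_norm, norm_sub_rev]
      linarith
    · intro w hw
      rw [mem_ball] at hw
      have hz : infDist (x + t • (y - x)) Ω = 2⁻¹ := htv
      have hlow : (4⁻¹:ℝ) ≤ infDist w Ω := by
        have := infDist_le_infDist_add_dist (x := x + t • (y - x)) (y := w) (s := Ω)
        rw [dist_comm] at hw
        linarith
      have hup : infDist w Ω ≤ 1 := by
        have := infDist_le_infDist_add_dist (x := w) (y := x + t • (y - x)) (s := Ω)
        linarith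
      have hwc : w ∈ Ωᶜ := by
        intro hmem
        have : infDist w Ω = 0 := infDist_zero_of_mem hmem
        linarith
      exact Or.inr ⟨subset_closure hwc, infDist_nonneg, hup⟩

lemma gen_ball (Ω : Set (EuclideanSpace ℝ (Fin n))) (a b : ℝ) (x : EuclideanSpace ℝ (Fin n))
    (hx : x ∈ genThick Ω a b) :
    ∃ z : EuclideanSpace ℝ (Fin n), dist z x ≤ max |a| |b| + 1 ∧
      ball z (4⁻¹ : ℝ) ⊆ unitThick Ω := by
  unfold genThick at hx
  split_ifs at hx with h1 h2
  · obtain ⟨hc, -, hub⟩ := hx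
    exact outer_ball Ω x _ hc (hub.trans ((le_abs_self b).trans (le_max_right _ _)))
  · rw [innerThick_eq_outerThick_compl] at hx
    obtain ⟨hc, -, hub⟩ := hx
    obtain ⟨z, hz1, hz2⟩ := outer_ball Ωᶜ x _ hc
      (hub.trans ((neg_le_abs a).trans (le_max_left _ _)))
    exact ⟨z, hz1, by rwa [unitThick_compl] at hz2⟩
  · rcases hx with hx | hx
    · rw [innerThick_eq_outerThick_compl] at hx
      obtain ⟨hc, -, hub⟩ := hx
      obtain ⟨z, hz1, hz2⟩ := outer_ball Ωᶜ x _ hc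
        (hub.trans ((neg_le_abs a).trans (le_max_left _ _)))
      exact ⟨z, hz1, by rwa [unitThick_compl] at hz2⟩
    · obtain ⟨hc, -, hub⟩ := hx
      exact outer_ball Ω x _ hc (hub.trans ((le_abs_self b).trans (le_max_right _ _)))

lemma isClosed_outerThick (Ω : Set (EuclideanSpace ℝ (Fin n))) (a b : ℝ) :
    IsClosed (outerThick Ω a b) := by
  have : outerThick Ω a b = closure Ωᶜ ∩ (fun x => infDist x Ω) ⁻¹' Icc a b := by
    ext x; simp [outerThick, Icc, and_assoc]
  rw [this]
  exact isClosed_closure.inter (isClosed_Icc.preimage (continuous_infDist_pt Ω))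

lemma isClosed_genThick (Ω : Set (EuclideanSpace ℝ (Fin n))) (a b : ℝ) :
    IsClosed (genThick Ω a b) := by
  unfold genThick
  split_ifs
  · exact isClosed_outerThick Ω a b
  · rw [innerThick_eq_outerThick_compl]; exact isClosed_outerThick _ _ _
  · exact IsClosed.union (by rw [innerThick_eq_outerThick_compl]; exact isClosed_outerThick _ _ _)
      (isClosed_outerThick _ _ _)

lemma isClosed_unitThick (Ω : Set (EuclideanSpace ℝ (Fin n))) :
    IsClosed (unitThick Ω) :=
  IsClosed.union (by rw [innerThick_eq_outerThick_compl]; exact isClosed_outerThick _ _ _)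
    (isClosed_outerThick _ _ _)

lemma one_add_norm_rpow_le (x y z : EuclideanSpace ℝ (Fin n)) {ν : ℝ} (hν : 0 ≤ ν) :
    (1 + ‖x - z‖) ^ ν ≤ (1 + ‖x - y‖) ^ ν * (1 + ‖y - z‖) ^ ν := by
  rw [← Real.mul_rpow (by positivity) (by positivity)]
  apply Real.rpow_le_rpow (by positivity) ?_ hν
  have h := norm_sub_le_norm_sub_add_norm_sub x y z
  nlinarith [norm_nonneg (x - y), norm_nonneg (y - z), norm_nonneg (x - z)]

lemma exists_envelope (m : EuclideanSpace ℝ (Fin n) → ℝ) (hpos : ∀ x, 0 < m x)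
    (C₀ ν₀ : ℝ) (hC₀ : 0 < C₀) (hν₀ : 0 ≤ ν₀)
    (hord : ∀ x y, m x ≤ C₀ * (1 + ‖x - y‖) ^ ν₀ * m y) :
    ∃ M : EuclideanSpace ℝ (Fin n) → ℝ≥0∞, Measurable M ∧
      (∀ x, ENNReal.ofReal (m x) ≤ M x) ∧
      (∀ x, M x ≤ ENNReal.ofReal ((C₀ * 2 ^ ν₀) * (C₀ * 2 ^ ν₀) * m x)) ∧
      (∀ x y, M x ≤ ENNReal.ofReal ((1 + ‖x - y‖) ^ ν₀) * M y) := by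
  set D := TopologicalSpace.denseSeq (EuclideanSpace ℝ (Fin n)) with hD
  have hDd : DenseRange D := TopologicalSpace.denseRange_denseSeq _
  refine ⟨fun x => ⨅ k, ENNReal.ofReal (C₀ * (1 + ‖x - D k‖) ^ ν₀ * m (D k)), ?_, ?_, ?_, ?_⟩
  · apply Measurable.iInf
    intro k
    apply ENNReal.continuous_ofReal.measurable.comp
    apply Continuous.measurable
    have h1 : Continuous fun x : EuclideanSpace ℝ (Fin n) => (1 + ‖x - D k‖) := by
      continuity
    exact (continuous_const.mul (h1.rpow_const (fun x => Or.inr hν₀))).mul continuous_const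
  · intro x
    apply le_iInf
    intro k
    exact ENNReal.ofReal_le_ofReal (hord x (D k))
  · intro x
    have hx : x ∈ closure (Set.range D) := hDd x
    obtain ⟨y, ⟨k, rfl⟩, hk⟩ := Metric.mem_closure_iff.mp hx 1 one_pos
    refine (iInf_le _ k).trans (ENNReal.ofReal_le_ofReal ?_)
    have hn1 : ‖x - D k‖ ≤ 1 := by rw [← dist_eq_norm]; exact hk.le
    have hn2 : ‖D k - x‖ ≤ 1 := by rw [← dist_eq_norm, dist_comm]; exact hk.le
    have hb1 : (1 + ‖x - D k‖) ^ ν₀ ≤ 2 ^ ν₀ :=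
      Real.rpow_le_rpow (by positivity) (by linarith) hν₀
    have hb : (1 + ‖D k - x‖) ^ ν₀ ≤ 2 ^ ν₀ :=
      Real.rpow_le_rpow (by positivity) (by linarith) hν₀
    have hb2 : m (D k) ≤ C₀ * 2 ^ ν₀ * m x :=
      (hord (D k) x).trans
        (mul_le_mul_of_nonneg_right (mul_le_mul_of_nonneg_left hb hC₀.le) (hpos x).le)
    have s1 : C₀ * (1 + ‖x - D k‖) ^ ν₀ ≤ C₀ * 2 ^ ν₀ := mul_le_mul_of_nonneg_left hb1 hC₀.le
    calc C₀ * (1 + ‖x - D k‖) ^ ν₀ * m (D k)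
        ≤ (C₀ * 2 ^ ν₀) * (C₀ * 2 ^ ν₀ * m x) :=
          mul_le_mul s1 hb2 (hpos _).le (by positivity)
      _ = C₀ * 2 ^ ν₀ * (C₀ * 2 ^ ν₀) * m x := by ring
  · intro x y
    have hne : ENNReal.ofReal ((1 + ‖x - y‖) ^ ν₀) ≠ 0 := by
      simp only [ne_eq, ENNReal.ofReal_eq_zero, not_le]
      exact Real.rpow_pos_of_pos (by positivity) ν₀
    rw [ENNReal.mul_iInf_of_ne hne ENNReal.ofReal_ne_top]
    apply iInf_mono
    intro k
    rw [← ENNReal.ofReal_mul (Real.rpow_nonneg (by positivity) ν₀)]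
    apply ENNReal.ofReal_le_ofReal
    have h := one_add_norm_rpow_le x y (D k) hν₀
    calc C₀ * (1 + ‖x - D k‖) ^ ν₀ * m (D k)
        ≤ C₀ * ((1 + ‖x - y‖) ^ ν₀ * (1 + ‖y - D k‖) ^ ν₀) * m (D k) :=
          mul_le_mul_of_nonneg_right (mul_le_mul_of_nonneg_left h hC₀.le) (hpos _).le
      _ = (1 + ‖x - y‖) ^ ν₀ * (C₀ * (1 + ‖y - D k‖) ^ ν₀ * m (D k)) := by ring

end OrderAux

open OrderAux

/-- Integrals of an order function over thickenings of the boundary are controlled by the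
integral over the unit thickening. -/
theorem orderFunction_thickening_bound {n : ℕ} (m : EuclideanSpace ℝ (Fin n) → ℝ)
    (hm : IsOrderFunction m) :
    ∃ C ν : ℝ, 0 < C ∧ 0 ≤ ν ∧
      ∀ (Ω : Set (EuclideanSpace ℝ (Fin n))) (a b : ℝ), a < b →
        ∫⁻ x in genThick Ω a b, ENNReal.ofReal (m x) ≤
          ENNReal.ofReal (C * (1 + max |a| |b|) ^ ν) *
            ∫⁻ x in unitThick Ω, ENNReal.ofReal (m x) := by
  obtain ⟨hpos, C₀, ν₀, hC₀, hν₀, hord⟩ := hm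
  obtain ⟨M, hMmeas, hmM, hMle, hMord⟩ := exists_envelope m hpos C₀ ν₀ hC₀ hν₀ hord
  set C₁ : ℝ := (C₀ * 2 ^ ν₀) * (C₀ * 2 ^ ν₀) with hC₁def
  have hC₁pos : 0 < C₁ := by
    have := Real.rpow_pos_of_pos (two_pos (α := ℝ)) ν₀
    positivity
  refine ⟨C₁ * ((8:ℝ)^n * 2^n * 3 ^ ν₀), ν₀ + n, by positivity, by positivity, ?_⟩
  intro Ω a b hab
  set R : ℝ := max |a| |b| with hRdef
  have hR0 : (0:ℝ) ≤ R := (abs_nonneg a).trans (le_max_left _ _)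
  set K : ℝ := R + 2 with hKdef
  have hK0 : (0:ℝ) ≤ K := by linarith
  set U : Set (EuclideanSpace ℝ (Fin n)) := unitThick Ω with hUdef
  set G : Set (EuclideanSpace ℝ (Fin n)) := genThick Ω a b with hGdef
  have hU : MeasurableSet U := (isClosed_unitThick Ω).measurableSet
  set c : ℝ≥0∞ := volume (ball (0:EuclideanSpace ℝ (Fin n)) 4⁻¹) with hcdef
  have hc0 : c ≠ 0 := (measure_ball_pos volume 0 (by norm_num)).ne'
  have hctop : c ≠ ⊤ := measure_ball_lt_top.ne
  set B1 : ℝ≥0∞ := volume (ball (0:EuclideanSpace ℝ (Fin n)) 1) with hB1def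
  have hB10 : B1 ≠ 0 := (measure_ball_pos volume 0 one_pos).ne'
  have hB1top : B1 ≠ ⊤ := measure_ball_lt_top.ne
  -- pointwise bound
  have P : ∀ x ∈ G, c * M x ≤ ENNReal.ofReal ((1+K) ^ ν₀) *
      ∫⁻ v, (closedBall (0:EuclideanSpace ℝ (Fin n)) K).indicator 1 v * U.indicator M (x + v) := by
    intro x hx
    obtain ⟨z, hz, hzb⟩ := gen_ball Ω a b x hx
    have hzn : ‖z - x‖ ≤ R + 1 := by rw [← dist_eq_norm]; exact hz
    have hball_sub : ball (z - x) (4⁻¹:ℝ) ⊆ closedBall (0:EuclideanSpace ℝ (Fin n)) K := by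
      intro v hv
      rw [mem_ball] at hv
      rw [mem_closedBall, dist_zero_right]
      have h1 : ‖v - (z - x)‖ < 4⁻¹ := by rw [← dist_eq_norm]; exact hv
      calc ‖v‖ = ‖(v - (z - x)) + (z - x)‖ := by congr 1; abel
        _ ≤ ‖v - (z - x)‖ + ‖z - x‖ := norm_add_le _ _
        _ ≤ K := by rw [hKdef]; linarith
    have key : ∀ v ∈ ball (z - x) (4⁻¹:ℝ),
        M x ≤ ENNReal.ofReal ((1+K) ^ ν₀) * U.indicator M (x + v) := by
      intro v hv
      have hmem : x + v ∈ ball z (4⁻¹:ℝ) := by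
        rw [mem_ball] at hv ⊢
        have heq : dist (x + v) z = dist v (z - x) := by
          rw [dist_eq_norm, dist_eq_norm]; congr 1; abel
        rw [heq]; exact hv
      rw [Set.indicator_of_mem (hzb hmem)]
      refine (hMord x (x+v)).trans (mul_le_mul_left (ENNReal.ofReal_le_ofReal ?_) _)
      apply Real.rpow_le_rpow (by positivity) ?_ hν₀
      have h1 : ‖x - (x+v)‖ = ‖v‖ := by rw [show x - (x+v) = -v by abel, norm_neg]
      rw [h1]
      have := hball_sub hv
      rw [mem_closedBall, dist_zero_right] at this
      linarith
    calc c * M x = M x * volume (ball (z - x) (4⁻¹:ℝ)) := by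
          rw [Measure.addHaar_ball_center volume (z - x) 4⁻¹, mul_comm]
      _ = ∫⁻ _ in ball (z - x) (4⁻¹:ℝ), M x := (setLIntegral_const _ _).symm
      _ ≤ ∫⁻ v in ball (z - x) (4⁻¹:ℝ),
            ENNReal.ofReal ((1+K) ^ ν₀) * U.indicator M (x + v) :=
          setLIntegral_mono' measurableSet_ball key
      _ = ENNReal.ofReal ((1+K) ^ ν₀) *
            ∫⁻ v in ball (z - x) (4⁻¹:ℝ), U.indicator M (x + v) :=
          lintegral_const_mul' _ _ ENNReal.ofReal_ne_top
      _ ≤ ENNReal.ofReal ((1+K) ^ ν₀) *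
            ∫⁻ v in closedBall (0:EuclideanSpace ℝ (Fin n)) K, U.indicator M (x + v) :=
          mul_le_mul_right (lintegral_mono_set hball_sub) _
      _ = ENNReal.ofReal ((1+K) ^ ν₀) *
            ∫⁻ v, (closedBall (0:EuclideanSpace ℝ (Fin n)) K).indicator (fun w => U.indicator M (x + w)) v := by
          rw [lintegral_indicator measurableSet_closedBall]
      _ = ENNReal.ofReal ((1+K) ^ ν₀) *
            ∫⁻ v, (closedBall (0:EuclideanSpace ℝ (Fin n)) K).indicator 1 v * U.indicator M (x + v) := by
          congr 1
          apply lintegral_congr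
          intro v
          by_cases hv : v ∈ closedBall (0:EuclideanSpace ℝ (Fin n)) K <;> simp [hv]
  -- global chain
  have hFmeas : Measurable (fun p : EuclideanSpace ℝ (Fin n) × EuclideanSpace ℝ (Fin n) =>
      (closedBall (0:EuclideanSpace ℝ (Fin n)) K).indicator 1 p.2 * U.indicator M (p.1 + p.2)) := by
    exact ((measurable_const.indicator measurableSet_closedBall).comp measurable_snd).mul
      ((hMmeas.indicator hU).comp (measurable_fst.add measurable_snd))
  have hswap : ∫⁻ x, ∫⁻ v, (closedBall (0:EuclideanSpace ℝ (Fin n)) K).indicator 1 v * U.indicator M (x + v)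
      = ∫⁻ v, ∫⁻ x, (closedBall (0:EuclideanSpace ℝ (Fin n)) K).indicator 1 v * U.indicator M (x + v) :=
    lintegral_lintegral_swap hFmeas.aemeasurable
  have hinner : ∀ v : EuclideanSpace ℝ (Fin n), (∫⁻ x, (closedBall (0:EuclideanSpace ℝ (Fin n)) K).indicator 1 v * U.indicator M (x + v))
      = (closedBall (0:EuclideanSpace ℝ (Fin n)) K).indicator 1 v * ∫⁻ x in U, M x := by
    intro v
    have hvne : (closedBall (0:EuclideanSpace ℝ (Fin n)) K).indicator (1 : EuclideanSpace ℝ (Fin n) → ℝ≥0∞) v ≠ ⊤ := by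
      by_cases hv : v ∈ closedBall (0:EuclideanSpace ℝ (Fin n)) K <;> simp [hv]
    rw [lintegral_const_mul' _ _ hvne]
    congr 1
    rw [lintegral_add_right_eq_self (U.indicator M) v, lintegral_indicator hU]
  have houter : (∫⁻ v, (closedBall (0:EuclideanSpace ℝ (Fin n)) K).indicator 1 v * ∫⁻ x in U, M x)
      = volume (closedBall (0:EuclideanSpace ℝ (Fin n)) K) * ∫⁻ x in U, M x := by
    calc (∫⁻ v, (closedBall (0:EuclideanSpace ℝ (Fin n)) K).indicator 1 v * ∫⁻ x in U, M x)
        = ∫⁻ v, (closedBall (0:EuclideanSpace ℝ (Fin n)) K).indicator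
            (fun _ => ∫⁻ x in U, M x) v := by
          apply lintegral_congr
          intro v
          by_cases hv : v ∈ closedBall (0:EuclideanSpace ℝ (Fin n)) K <;> simp [hv]
      _ = ∫⁻ _ in closedBall (0:EuclideanSpace ℝ (Fin n)) K, ∫⁻ x in U, M x :=
          lintegral_indicator measurableSet_closedBall _
      _ = volume (closedBall (0:EuclideanSpace ℝ (Fin n)) K) * ∫⁻ x in U, M x := by
          rw [setLIntegral_const, mul_comm]
  have main : c * ∫⁻ x in G, M x ≤
      ENNReal.ofReal ((1+K) ^ ν₀) * (volume (closedBall (0:EuclideanSpace ℝ (Fin n)) K) * ∫⁻ x in U, M x) := by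
    calc c * ∫⁻ x in G, M x = ∫⁻ x in G, c * M x := (lintegral_const_mul' c _ hctop).symm
      _ ≤ ∫⁻ x in G, ENNReal.ofReal ((1+K) ^ ν₀) *
            ∫⁻ v, (closedBall (0:EuclideanSpace ℝ (Fin n)) K).indicator 1 v * U.indicator M (x + v) :=
          setLIntegral_mono' (isClosed_genThick Ω a b).measurableSet P
      _ = ENNReal.ofReal ((1+K) ^ ν₀) * ∫⁻ x in G,
            ∫⁻ v, (closedBall (0:EuclideanSpace ℝ (Fin n)) K).indicator 1 v * U.indicator M (x + v) :=
          lintegral_const_mul' _ _ ENNReal.ofReal_ne_top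
      _ ≤ ENNReal.ofReal ((1+K) ^ ν₀) * ∫⁻ x,
            ∫⁻ v, (closedBall (0:EuclideanSpace ℝ (Fin n)) K).indicator 1 v * U.indicator M (x + v) :=
          mul_le_mul_right (setLIntegral_le_lintegral _ _) _
      _ = ENNReal.ofReal ((1+K) ^ ν₀) * (volume (closedBall (0:EuclideanSpace ℝ (Fin n)) K) * ∫⁻ x in U, M x) := by
          rw [hswap]
          congr 1
          rw [← houter]
          exact lintegral_congr hinner
  -- from main to the statement
  have hA : (∫⁻ x in G, M x) ≤
      c⁻¹ * (ENNReal.ofReal ((1+K) ^ ν₀) * (volume (closedBall (0:EuclideanSpace ℝ (Fin n)) K) * ∫⁻ x in U, M x)) := by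
    have h := mul_le_mul_right main c⁻¹
    rwa [← mul_assoc, ENNReal.inv_mul_cancel hc0 hctop, one_mul] at h
  have hJ : (∫⁻ x in U, M x) ≤ ENNReal.ofReal C₁ * ∫⁻ x in U, ENNReal.ofReal (m x) := by
    calc (∫⁻ x in U, M x) ≤ ∫⁻ x in U, ENNReal.ofReal (C₁ * m x) := lintegral_mono fun x => hMle x
      _ = ∫⁻ x in U, ENNReal.ofReal C₁ * ENNReal.ofReal (m x) := by
          apply lintegral_congr; intro x; rw [ENNReal.ofReal_mul hC₁pos.le]
      _ = ENNReal.ofReal C₁ * ∫⁻ x in U, ENNReal.ofReal (m x) :=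
          lintegral_const_mul' _ _ ENNReal.ofReal_ne_top
  -- the constant computation
  have hcb : volume (closedBall (0:EuclideanSpace ℝ (Fin n)) K) = ENNReal.ofReal (K ^ n) * B1 := by
    rw [hB1def, Measure.addHaar_closedBall volume (0:EuclideanSpace ℝ (Fin n)) hK0, finrank_euclideanSpace_fin]
  have hcinv : c⁻¹ ≤ ENNReal.ofReal ((8:ℝ) ^ n) * B1⁻¹ := by
    have hsub : closedBall (0:EuclideanSpace ℝ (Fin n)) (8⁻¹:ℝ) ⊆ ball (0:EuclideanSpace ℝ (Fin n)) (4⁻¹:ℝ) :=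
      closedBall_subset_ball (by norm_num)
    have hlb : ENNReal.ofReal ((8⁻¹:ℝ) ^ n) * B1 ≤ c := by
      have h := Measure.addHaar_closedBall (μ := volume) (0:EuclideanSpace ℝ (Fin n))
        (by norm_num : (0:ℝ) ≤ 8⁻¹)
      rw [finrank_euclideanSpace_fin] at h
      rw [hB1def, ← h]
      exact measure_mono hsub
    calc c⁻¹ ≤ (ENNReal.ofReal ((8⁻¹:ℝ) ^ n) * B1)⁻¹ := ENNReal.inv_le_inv' hlb
      _ = (ENNReal.ofReal ((8⁻¹:ℝ) ^ n))⁻¹ * B1⁻¹ := by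
          have h8 : ENNReal.ofReal ((8⁻¹:ℝ) ^ n) ≠ 0 := by
            simp only [ne_eq, ENNReal.ofReal_eq_zero, not_le]
            positivity
          rw [ENNReal.mul_inv (Or.inl h8) (Or.inl ENNReal.ofReal_ne_top)]
      _ = ENNReal.ofReal ((8:ℝ) ^ n) * B1⁻¹ := by
          rw [← ENNReal.ofReal_inv_of_pos (by positivity), ← inv_pow, inv_inv]
  -- final assembly
  have h8 : (0:ℝ) ≤ 8 ^ n := by positivity
  have hP1nn : (0:ℝ) ≤ (1 + K) ^ ν₀ := Real.rpow_nonneg (by linarith) _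
  have hKn : (0:ℝ) ≤ K ^ n := pow_nonneg hK0 n
  have chain : ∫⁻ x in G, ENNReal.ofReal (m x) ≤
      (ENNReal.ofReal ((8:ℝ) ^ n) * B1⁻¹) * (ENNReal.ofReal ((1 + K) ^ ν₀) *
        (ENNReal.ofReal (K ^ n) * B1 *
          (ENNReal.ofReal C₁ * ∫⁻ x in U, ENNReal.ofReal (m x)))) := by
    calc ∫⁻ x in G, ENNReal.ofReal (m x) ≤ ∫⁻ x in G, M x := lintegral_mono fun x => hmM x
      _ ≤ c⁻¹ * (ENNReal.ofReal ((1 + K) ^ ν₀) *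
            (volume (closedBall (0:EuclideanSpace ℝ (Fin n)) K) * ∫⁻ x in U, M x)) := hA
      _ ≤ _ := by
          rw [hcb]
          exact mul_le_mul' hcinv (mul_le_mul_right (mul_le_mul_right hJ _) _)
  have hBB : B1⁻¹ * B1 = 1 := ENNReal.inv_mul_cancel hB10 hB1top
  have heq : (ENNReal.ofReal ((8:ℝ) ^ n) * B1⁻¹) * (ENNReal.ofReal ((1 + K) ^ ν₀) *
        (ENNReal.ofReal (K ^ n) * B1 *
          (ENNReal.ofReal C₁ * ∫⁻ x in U, ENNReal.ofReal (m x)))) =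
      (ENNReal.ofReal ((8:ℝ) ^ n) * ENNReal.ofReal ((1 + K) ^ ν₀) * ENNReal.ofReal (K ^ n) *
        ENNReal.ofReal C₁) * ∫⁻ x in U, ENNReal.ofReal (m x) := by
    rw [← one_mul ((ENNReal.ofReal ((8:ℝ) ^ n) * ENNReal.ofReal ((1 + K) ^ ν₀) *
      ENNReal.ofReal (K ^ n) * ENNReal.ofReal C₁) * ∫⁻ x in U, ENNReal.ofReal (m x)), ← hBB]
    ring
  have hreal : (8:ℝ) ^ n * (1 + K) ^ ν₀ * K ^ n * C₁ ≤
      C₁ * ((8:ℝ) ^ n * 2 ^ n * 3 ^ ν₀) * (1 + R) ^ (ν₀ + (n:ℝ)) := by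
    have e1 : (1 + K) ^ ν₀ ≤ 3 ^ ν₀ * (1 + R) ^ ν₀ := by
      calc (1 + K) ^ ν₀ ≤ (3 * (1 + R)) ^ ν₀ :=
            Real.rpow_le_rpow (by linarith) (by rw [hKdef]; linarith) hν₀
        _ = 3 ^ ν₀ * (1 + R) ^ ν₀ := Real.mul_rpow (by norm_num) (by linarith)
    have e2 : K ^ n ≤ (2:ℝ) ^ n * (1 + R) ^ n := by
      calc K ^ n ≤ (2 * (1 + R)) ^ n := pow_le_pow_left₀ hK0 (by rw [hKdef]; linarith) n
        _ = (2:ℝ) ^ n * (1 + R) ^ n := mul_pow _ _ _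
    have e3 : (1 + R) ^ ν₀ * (1 + R) ^ n = (1 + R) ^ (ν₀ + (n:ℝ)) := by
      rw [← Real.rpow_natCast (1 + R) n, ← Real.rpow_add (by linarith : (0:ℝ) < 1 + R)]
    have hRν : (0:ℝ) ≤ (1 + R) ^ ν₀ := Real.rpow_nonneg (by linarith) _
    have h3ν : (0:ℝ) ≤ (3:ℝ) ^ ν₀ := Real.rpow_nonneg (by norm_num) _
    calc (8:ℝ) ^ n * (1 + K) ^ ν₀ * K ^ n * C₁
        ≤ ((8:ℝ) ^ n * (3 ^ ν₀ * (1 + R) ^ ν₀)) * ((2:ℝ) ^ n * (1 + R) ^ n) * C₁ := by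
          apply mul_le_mul_of_nonneg_right _ hC₁pos.le
          exact mul_le_mul (mul_le_mul_of_nonneg_left e1 h8) e2 hKn
            (mul_nonneg h8 (mul_nonneg h3ν hRν))
      _ = C₁ * ((8:ℝ) ^ n * 2 ^ n * 3 ^ ν₀) * ((1 + R) ^ ν₀ * (1 + R) ^ n) := by ring
      _ = C₁ * ((8:ℝ) ^ n * 2 ^ n * 3 ^ ν₀) * (1 + R) ^ (ν₀ + (n:ℝ)) := by rw [e3]
  have hconst : ENNReal.ofReal ((8:ℝ) ^ n) * ENNReal.ofReal ((1 + K) ^ ν₀) *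
      ENNReal.ofReal (K ^ n) * ENNReal.ofReal C₁ ≤
      ENNReal.ofReal (C₁ * ((8:ℝ) ^ n * 2 ^ n * 3 ^ ν₀) * (1 + R) ^ (ν₀ + (n:ℝ))) := by
    rw [← ENNReal.ofReal_mul h8, ← ENNReal.ofReal_mul (mul_nonneg h8 hP1nn),
      ← ENNReal.ofReal_mul (mul_nonneg (mul_nonneg h8 hP1nn) hKn)]
    exact ENNReal.ofReal_le_ofReal hreal
  refine chain.trans ?_
  rw [heq]
  exact mul_le_mul_left hconst _


end
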